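/- Define d : ℝ → ℝ by d(x) = e^{8x} − 2(8x² + 8x + 3)e^{4x} + 1. Let k ∈ ℂ with k ≠ i, and define N̄(x; k) = (N̄₁(x; k), N̄₂(x; k)) by N̄₁(x; k) = 1 + 4i·((8(k−i)x² + 4(k−2i)x + k − 2i)e^{4x} + k)/((k−i)²·d(x)) and N̄₂(x; k) = −4i·e^{2x}·((2(k−i)x − i)e^{4x} + 2(k+i)x + 2k + i)/((k−i)²·d(x)) (defined for x with d(x) ≠ 0). Then N̄(x; k) → (1, 0) as x → +∞, and if in addition k ≠ −i then N̄(x; k) → ((k+i)²/(k−i)², 0) as x → −∞. -/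

import Mathlib

set_option autoImplicit false

open Filter

private lemma exp_decay_atTop' (n : ℕ) (c : ℝ) (hc : c < 0) :
    Tendsto (fun x : ℝ => x ^ n * Real.exp (c * x)) atTop (nhds 0) := by
  have h1 : Tendsto (fun x : ℝ => (-c) * x) atTop atTop :=
    tendsto_id.const_mul_atTop (by linarith)
  have h2 := (Real.tendsto_pow_mul_exp_neg_atTop_nhds_zero n).comp h1
  have h3 : Tendsto (fun x : ℝ => ((-c) * x) ^ n * Real.exp (c * x)) atTop (nhds 0) := by
    refine h2.congr fun x => ?_
    simp [Function.comp, neg_mul, neg_neg]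
  have h4 := h3.const_mul ((-c) ^ n)⁻¹
  rw [mul_zero] at h4
  refine h4.congr fun x => ?_
  have hcne : (-c) ^ n ≠ 0 := pow_ne_zero _ (by linarith)
  field_simp
  ring

private lemma exp_decay_atBot' (n : ℕ) (c : ℝ) (hc : 0 < c) :
    Tendsto (fun x : ℝ => x ^ n * Real.exp (c * x)) atBot (nhds 0) := by
  have h := (exp_decay_atTop' n (-c) (by linarith)).comp tendsto_neg_atBot_atTop
  have h2 := h.const_mul ((-1 : ℝ) ^ n)
  rw [mul_zero] at h2
  refine h2.congr fun x => ?_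
  simp only [Function.comp]
  rw [← mul_assoc, ← mul_pow]
  ring_nf

private lemma cdecay_atTop (n : ℕ) (c : ℝ) (hc : c < 0) :
    Tendsto (fun x : ℝ => (x : ℂ) ^ n * (Real.exp (c * x) : ℂ)) atTop (nhds 0) := by
  have := (Complex.continuous_ofReal.tendsto 0).comp (exp_decay_atTop' n c hc)
  refine this.congr fun x => ?_
  simp [Function.comp]

private lemma cdecay_atBot (n : ℕ) (c : ℝ) (hc : 0 < c) :
    Tendsto (fun x : ℝ => (x : ℂ) ^ n * (Real.exp (c * x) : ℂ)) atBot (nhds 0) := by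
  have := (Complex.continuous_ofReal.tendsto 0).comp (exp_decay_atBot' n c hc)
  refine this.congr fun x => ?_
  simp [Function.comp]

/-- `d(x) = e^{8x} − 2(8x² + 8x + 3)e^{4x} + 1`. -/
noncomputable def negatonD (x : ℝ) : ℝ :=
  Real.exp (8 * x) - 2 * (8 * x ^ 2 + 8 * x + 3) * Real.exp (4 * x) + 1

/-- First component of `N̄(x;k)`. -/
noncomputable def negatonNbar₁ (k : ℂ) (x : ℝ) : ℂ :=
  1 + 4 * Complex.I *
      ((8 * (k - Complex.I) * (x : ℂ) ^ 2 + 4 * (k - 2 * Complex.I) * (x : ℂ)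
          + k - 2 * Complex.I) * (Real.exp (4 * x) : ℂ) + k) /
    ((k - Complex.I) ^ 2 * (negatonD x : ℂ))

/-- Second component of `N̄(x;k)`. -/
noncomputable def negatonNbar₂ (k : ℂ) (x : ℝ) : ℂ :=
  -(4 * Complex.I * (Real.exp (2 * x) : ℂ) *
      ((2 * (k - Complex.I) * (x : ℂ) - Complex.I) * (Real.exp (4 * x) : ℂ)
        + 2 * (k + Complex.I) * (x : ℂ) + 2 * k + Complex.I)) /
    ((k - Complex.I) ^ 2 * (negatonD x : ℂ))

private lemma expC_mul (a b : ℝ) :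
    (Real.exp a : ℂ) * (Real.exp b : ℂ) = (Real.exp (a + b) : ℂ) := by
  norm_cast
  rw [Real.exp_add]

/-- the rescaled denominator `d(x) e^{-8x}` tends to 1 at `+∞`. -/
private lemma D_rescaled_atTop :
    Tendsto (fun x : ℝ => ((negatonD x * Real.exp ((-8) * x) : ℝ) : ℂ)) atTop (nhds 1) := by
  have hreal : Tendsto (fun x : ℝ => negatonD x * Real.exp ((-8) * x)) atTop (nhds 1) := by
    have h2 := exp_decay_atTop' 2 (-4) (by norm_num)
    have h1 := exp_decay_atTop' 1 (-4) (by norm_num)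
    have h0 := exp_decay_atTop' 0 (-4) (by norm_num)
    have h8 := exp_decay_atTop' 0 (-8) (by norm_num)
    have hcomb : Tendsto (fun x : ℝ =>
        1 - 16 * (x ^ 2 * Real.exp ((-4) * x)) - 16 * (x ^ 1 * Real.exp ((-4) * x))
          - 6 * (x ^ 0 * Real.exp ((-4) * x)) + x ^ 0 * Real.exp ((-8) * x))
        atTop (nhds 1) := by
      have H := ((((tendsto_const_nhds (x := (1:ℝ)) (f := atTop)).sub
        (h2.const_mul 16)).sub (h1.const_mul 16)).sub (h0.const_mul 6)).add h8
      convert H using 2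
      norm_num
    refine hcomb.congr fun x => ?_
    have e1 : Real.exp (8 * x) * Real.exp ((-8) * x) = 1 := by
      rw [← Real.exp_add, show (8:ℝ) * x + (-8) * x = 0 by ring, Real.exp_zero]
    have e2 : Real.exp (4 * x) * Real.exp ((-8) * x) = Real.exp ((-4) * x) := by
      rw [← Real.exp_add, show (4:ℝ) * x + (-8) * x = (-4) * x by ring]
    unfold negatonD
    linear_combination e1.symm - 2 * (8 * x ^ 2 + 8 * x + 3) * e2.symm
  have h := (Complex.continuous_ofReal.tendsto 1).comp hreal
  rw [Complex.ofReal_one] at h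
  exact h.congr fun x => rfl

/-- `N̄(x;k) → (1, 0)` as `x → +∞`, and, if additionally `k ≠ −i`,
`N̄(x;k) → ((k+i)²/(k−i)², 0)` as `x → −∞`. -/
theorem negaton_Nbar_limits
    (k : ℂ) (hk : k ≠ Complex.I) :
    (Tendsto (fun x : ℝ => negatonNbar₁ k x) atTop (nhds 1) ∧
     Tendsto (fun x : ℝ => negatonNbar₂ k x) atTop (nhds 0)) ∧
    (k ≠ -Complex.I →
      Tendsto (fun x : ℝ => negatonNbar₁ k x) atBot
        (nhds ((k + Complex.I) ^ 2 / (k - Complex.I) ^ 2)) ∧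
      Tendsto (fun x : ℝ => negatonNbar₂ k x) atBot (nhds 0)) := by
  have hki : (k - Complex.I) ≠ 0 := sub_ne_zero.mpr hk
  have hki2 : (k - Complex.I) ^ 2 ≠ 0 := pow_ne_zero _ hki
  have hdlim : Tendsto
      (fun x : ℝ => (k - Complex.I) ^ 2 * ((negatonD x * Real.exp ((-8) * x) : ℝ) : ℂ))
      atTop (nhds ((k - Complex.I) ^ 2 * 1)) := D_rescaled_atTop.const_mul _
  have hdne : ((k - Complex.I) ^ 2 * 1 : ℂ) ≠ 0 := by simpa using hki2
  constructor
  · constructor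
    · -- N̄₁ at +∞
      have hFlim : Tendsto (fun x : ℝ =>
          8 * (k - Complex.I) * ((x : ℂ) ^ 2 * (Real.exp ((-4) * x) : ℂ))
            + 4 * (k - 2 * Complex.I) * ((x : ℂ) ^ 1 * (Real.exp ((-4) * x) : ℂ))
            + (k - 2 * Complex.I) * ((x : ℂ) ^ 0 * (Real.exp ((-4) * x) : ℂ))
            + k * ((x : ℂ) ^ 0 * (Real.exp ((-8) * x) : ℂ))) atTop (nhds 0) := by
        have H := ((((cdecay_atTop 2 (-4) (by norm_num)).const_mul (8 * (k - Complex.I))).add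
          ((cdecay_atTop 1 (-4) (by norm_num)).const_mul (4 * (k - 2 * Complex.I)))).add
          ((cdecay_atTop 0 (-4) (by norm_num)).const_mul (k - 2 * Complex.I))).add
          ((cdecay_atTop 0 (-8) (by norm_num)).const_mul k)
        convert H using 2
        ring
      have hmain : Tendsto (fun x : ℝ => 1 +
          4 * Complex.I * (8 * (k - Complex.I) * ((x : ℂ) ^ 2 * (Real.exp ((-4) * x) : ℂ))
            + 4 * (k - 2 * Complex.I) * ((x : ℂ) ^ 1 * (Real.exp ((-4) * x) : ℂ))
            + (k - 2 * Complex.I) * ((x : ℂ) ^ 0 * (Real.exp ((-4) * x) : ℂ))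
            + k * ((x : ℂ) ^ 0 * (Real.exp ((-8) * x) : ℂ))) /
          ((k - Complex.I) ^ 2 * ((negatonD x * Real.exp ((-8) * x) : ℝ) : ℂ)))
          atTop (nhds 1) := by
        have H := (tendsto_const_nhds (x := (1:ℂ)) (f := atTop)).add
          ((hFlim.const_mul (4 * Complex.I)).div hdlim hdne)
        convert H using 2
        · rfl
        · ring
      refine hmain.congr fun x => ?_
      unfold negatonNbar₁
      have he : (Real.exp ((-8) * x) : ℂ) ≠ 0 := by
        simpa using Real.exp_ne_zero ((-8) * x)
      have e2 : (Real.exp (4 * x) : ℂ) * (Real.exp ((-8) * x) : ℂ)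
          = (Real.exp ((-4) * x) : ℂ) := by
        rw [expC_mul, show (4:ℝ) * x + (-8) * x = (-4) * x by ring]
      have hnum : 4 * Complex.I * (8 * (k - Complex.I) * ((x : ℂ) ^ 2 * (Real.exp ((-4) * x) : ℂ))
            + 4 * (k - 2 * Complex.I) * ((x : ℂ) ^ 1 * (Real.exp ((-4) * x) : ℂ))
            + (k - 2 * Complex.I) * ((x : ℂ) ^ 0 * (Real.exp ((-4) * x) : ℂ))
            + k * ((x : ℂ) ^ 0 * (Real.exp ((-8) * x) : ℂ))) =
          (4 * Complex.I * ((8 * (k - Complex.I) * (x : ℂ) ^ 2 + 4 * (k - 2 * Complex.I) * (x : ℂ)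
          + k - 2 * Complex.I) * (Real.exp (4 * x) : ℂ) + k)) * (Real.exp ((-8) * x) : ℂ) := by
        linear_combination (-(4 * Complex.I * (8 * (k - Complex.I) * (x:ℂ) ^ 2
          + 4 * (k - 2 * Complex.I) * (x:ℂ) + k - 2 * Complex.I))) * e2
      have hden : (k - Complex.I) ^ 2 * ((negatonD x * Real.exp ((-8) * x) : ℝ) : ℂ)
          = ((k - Complex.I) ^ 2 * (negatonD x : ℂ)) * (Real.exp ((-8) * x) : ℂ) := by
        push_cast; ring
      rw [hnum, hden, mul_div_mul_right _ _ he]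
    · -- N̄₂ at +∞
      have hFlim : Tendsto (fun x : ℝ =>
          -(4 * Complex.I * (2 * (k - Complex.I) * ((x : ℂ) ^ 1 * (Real.exp ((-2) * x) : ℂ))
            - Complex.I * ((x : ℂ) ^ 0 * (Real.exp ((-2) * x) : ℂ))
            + 2 * (k + Complex.I) * ((x : ℂ) ^ 1 * (Real.exp ((-6) * x) : ℂ))
            + (2 * k + Complex.I) * ((x : ℂ) ^ 0 * (Real.exp ((-6) * x) : ℂ)))))
          atTop (nhds 0) := by
        have H := ((((((cdecay_atTop 1 (-2) (by norm_num)).const_mul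
          (2 * (k - Complex.I))).sub
          ((cdecay_atTop 0 (-2) (by norm_num)).const_mul Complex.I)).add
          ((cdecay_atTop 1 (-6) (by norm_num)).const_mul (2 * (k + Complex.I)))).add
          ((cdecay_atTop 0 (-6) (by norm_num)).const_mul (2 * k + Complex.I))).const_mul
          (4 * Complex.I)).neg
        convert H using 2
        ring
      have hmain : Tendsto (fun x : ℝ =>
          -(4 * Complex.I * (2 * (k - Complex.I) * ((x : ℂ) ^ 1 * (Real.exp ((-2) * x) : ℂ))
            - Complex.I * ((x : ℂ) ^ 0 * (Real.exp ((-2) * x) : ℂ))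
            + 2 * (k + Complex.I) * ((x : ℂ) ^ 1 * (Real.exp ((-6) * x) : ℂ))
            + (2 * k + Complex.I) * ((x : ℂ) ^ 0 * (Real.exp ((-6) * x) : ℂ)))) /
          ((k - Complex.I) ^ 2 * ((negatonD x * Real.exp ((-8) * x) : ℝ) : ℂ)))
          atTop (nhds 0) := by
        have H := hFlim.div hdlim hdne
        convert H using 2
        · rfl
        · rw [zero_div]
      refine hmain.congr fun x => ?_
      unfold negatonNbar₂
      have he : (Real.exp ((-8) * x) : ℂ) ≠ 0 := by
        simpa using Real.exp_ne_zero ((-8) * x)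
      have e2 : (Real.exp (2 * x) : ℂ) * ((Real.exp (4 * x) : ℂ) * (Real.exp ((-8) * x) : ℂ))
          = (Real.exp ((-2) * x) : ℂ) := by
        rw [expC_mul, expC_mul, show (2:ℝ) * x + (4 * x + (-8) * x) = (-2) * x by ring]
      have e6 : (Real.exp (2 * x) : ℂ) * (Real.exp ((-8) * x) : ℂ)
          = (Real.exp ((-6) * x) : ℂ) := by
        rw [expC_mul, show (2:ℝ) * x + (-8) * x = (-6) * x by ring]
      have hnum : -(4 * Complex.I * (2 * (k - Complex.I) * ((x : ℂ) ^ 1 * (Real.exp ((-2) * x) : ℂ))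
            - Complex.I * ((x : ℂ) ^ 0 * (Real.exp ((-2) * x) : ℂ))
            + 2 * (k + Complex.I) * ((x : ℂ) ^ 1 * (Real.exp ((-6) * x) : ℂ))
            + (2 * k + Complex.I) * ((x : ℂ) ^ 0 * (Real.exp ((-6) * x) : ℂ)))) =
          (-(4 * Complex.I * (Real.exp (2 * x) : ℂ) *
            ((2 * (k - Complex.I) * (x : ℂ) - Complex.I) * (Real.exp (4 * x) : ℂ)
              + 2 * (k + Complex.I) * (x : ℂ) + 2 * k + Complex.I))) * (Real.exp ((-8) * x) : ℂ) := by
        linear_combination (4 * Complex.I * (2 * (k - Complex.I) * (x:ℂ) - Complex.I)) * e2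
          + (4 * Complex.I * (2 * (k + Complex.I) * (x:ℂ) + 2 * k + Complex.I)) * e6
      have hden : (k - Complex.I) ^ 2 * ((negatonD x * Real.exp ((-8) * x) : ℝ) : ℂ)
          = ((k - Complex.I) ^ 2 * (negatonD x : ℂ)) * (Real.exp ((-8) * x) : ℂ) := by
        push_cast; ring
      rw [hnum, hden, mul_div_mul_right _ _ he]
  · -- at −∞
    intro _
    have hDbot : Tendsto (fun x : ℝ => ((negatonD x : ℝ) : ℂ)) atBot (nhds 1) := by
      have hreal : Tendsto negatonD atBot (nhds 1) := by
        have h2 := exp_decay_atBot' 2 4 (by norm_num)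
        have h1 := exp_decay_atBot' 1 4 (by norm_num)
        have h0 := exp_decay_atBot' 0 4 (by norm_num)
        have h8 := exp_decay_atBot' 0 8 (by norm_num)
        have hcomb : Tendsto (fun x : ℝ =>
            x ^ 0 * Real.exp (8 * x) - 16 * (x ^ 2 * Real.exp (4 * x))
              - 16 * (x ^ 1 * Real.exp (4 * x)) - 6 * (x ^ 0 * Real.exp (4 * x)) + 1)
            atBot (nhds 1) := by
          have H := (((h8.sub (h2.const_mul 16)).sub (h1.const_mul 16)).sub
            (h0.const_mul 6)).add (tendsto_const_nhds (x := (1:ℝ)) (f := atBot))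
          convert H using 2
          norm_num
        refine hcomb.congr fun x => ?_
        unfold negatonD
        ring
      have h := (Complex.continuous_ofReal.tendsto 1).comp hreal
      rw [Complex.ofReal_one] at h
      exact h.congr fun x => rfl
    have hd : Tendsto (fun x : ℝ => (k - Complex.I) ^ 2 * ((negatonD x : ℝ) : ℂ)) atBot
        (nhds ((k - Complex.I) ^ 2 * 1)) := hDbot.const_mul _
    constructor
    · -- N̄₁ at −∞
      have hnum : Tendsto (fun x : ℝ =>
          4 * Complex.I * ((8 * (k - Complex.I) * (x : ℂ) ^ 2 + 4 * (k - 2 * Complex.I) * (x : ℂ)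
          + k - 2 * Complex.I) * (Real.exp (4 * x) : ℂ) + k)) atBot (nhds (4 * Complex.I * k)) := by
        have H := (((((cdecay_atBot 2 4 (by norm_num)).const_mul (8 * (k - Complex.I))).add
          ((cdecay_atBot 1 4 (by norm_num)).const_mul (4 * (k - 2 * Complex.I)))).add
          ((cdecay_atBot 0 4 (by norm_num)).const_mul (k - 2 * Complex.I))).add
          (tendsto_const_nhds (x := k) (f := atBot))).const_mul (4 * Complex.I)
        have H0 : Tendsto (fun x : ℝ =>
            4 * Complex.I * (8 * (k - Complex.I) * ((x : ℂ) ^ 2 * (Real.exp (4 * x) : ℂ))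
              + 4 * (k - 2 * Complex.I) * ((x : ℂ) ^ 1 * (Real.exp (4 * x) : ℂ))
              + (k - 2 * Complex.I) * ((x : ℂ) ^ 0 * (Real.exp (4 * x) : ℂ)) + k))
            atBot (nhds (4 * Complex.I * k)) := by
          convert H using 2
          ring
        refine H0.congr fun x => ?_
        push_cast
        ring
      have hlim := (tendsto_const_nhds (x := (1:ℂ)) (f := atBot)).add (hnum.div hd hdne)
      have hval : (1 : ℂ) + 4 * Complex.I * k / ((k - Complex.I) ^ 2 * 1)
          = (k + Complex.I) ^ 2 / (k - Complex.I) ^ 2 := by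
        field_simp
        ring
      rw [hval] at hlim
      exact hlim.congr fun x => rfl
    · -- N̄₂ at −∞
      have hnum : Tendsto (fun x : ℝ =>
          -(4 * Complex.I * (Real.exp (2 * x) : ℂ) *
            ((2 * (k - Complex.I) * (x : ℂ) - Complex.I) * (Real.exp (4 * x) : ℂ)
              + 2 * (k + Complex.I) * (x : ℂ) + 2 * k + Complex.I))) atBot (nhds 0) := by
        have H := ((((((cdecay_atBot 1 6 (by norm_num)).const_mul
          (2 * (k - Complex.I))).sub
          ((cdecay_atBot 0 6 (by norm_num)).const_mul Complex.I)).add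
          ((cdecay_atBot 1 2 (by norm_num)).const_mul (2 * (k + Complex.I)))).add
          ((cdecay_atBot 0 2 (by norm_num)).const_mul (2 * k + Complex.I))).const_mul
          (4 * Complex.I)).neg
        have H0 : Tendsto (fun x : ℝ =>
            -(4 * Complex.I * (2 * (k - Complex.I) * ((x : ℂ) ^ 1 * (Real.exp (6 * x) : ℂ))
              - Complex.I * ((x : ℂ) ^ 0 * (Real.exp (6 * x) : ℂ))
              + 2 * (k + Complex.I) * ((x : ℂ) ^ 1 * (Real.exp (2 * x) : ℂ))
              + (2 * k + Complex.I) * ((x : ℂ) ^ 0 * (Real.exp (2 * x) : ℂ)))))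
            atBot (nhds 0) := by
          convert H using 2
          ring
        refine H0.congr fun x => ?_
        have e6 : (Real.exp (2 * x) : ℂ) * (Real.exp (4 * x) : ℂ)
            = (Real.exp (6 * x) : ℂ) := by
          rw [expC_mul, show (2:ℝ) * x + 4 * x = 6 * x by ring]
        linear_combination (-(4 * Complex.I * (2 * (k - Complex.I) * (x:ℂ) - Complex.I))) * e6.symm
      have hdiv := hnum.div hd hdne
      rw [zero_div] at hdiv
      exact hdiv.congr fun x => rfl
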